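/- Let Γ be a graph on vertex set V with |V| = n, let 𝓕 be a family of graphs, let 𝒱 = {V_1,...,V_k} be an equipartition of V with k ≤ εn, and let R = Γ/𝒱 be the cluster graph. Suppose S is a weighted graph on [k] with S ≤ R, t(F,S) = 0 for all F ∈ 𝓕, and e(S) = k²·ex(R,𝓕) (i.e., S maximizes edge weight). Let G be the spanning subgraph of Γ obtained by deleting all edges between V_i and V_j whenever S(i,j) = 0. Then G is 𝓕-free and e(G) ≥ (ex(R,𝓕) - ε)·n². -/

import Mathlib

open Finset

attribute [local instance] Classical.propDecidable

/-- The cluster-graph edge weight: density of ordered adjacent pairs between classes. -/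
noncomputable def clusterW {V : Type*} {k : ℕ} (G : SimpleGraph V)
    (P : Fin k → Finset V) (i j : Fin k) : ℝ :=
  ((((P i) ×ˢ (P j)).filter fun p => G.Adj p.1 p.2).card : ℝ) /
    (((P i).card : ℝ) * ((P j).card : ℝ))

/-- Homomorphism weight of a map `φ` from the vertices of `F` into a weighted graph `R`. -/
noncomputable def homW {α V : Type*} [Fintype α] (F : SimpleGraph α)
    (R : V → V → ℝ) (φ : α → V) : ℝ :=
  ∏ e ∈ F.edgeFinset, R (φ (Quot.out e).1) (φ (Quot.out e).2)

/-- Homomorphism density of `F` in a weighted graph `R`. -/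
noncomputable def tW {α V : Type*} [Fintype α] [Fintype V] (F : SimpleGraph α)
    (R : V → V → ℝ) : ℝ :=
  (∑ φ : α → V, homW F R φ) / ((Fintype.card V : ℝ) ^ (Fintype.card α))

/-- Total edge weight of a weighted graph. -/
noncomputable def eW {V : Type*} [Fintype V] (R : V → V → ℝ) : ℝ :=
  (∑ i, ∑ j, R i j) / 2

/-- Normalized edit distance between two weighted graphs on the same vertex set. -/
noncomputable def distW {V : Type*} [Fintype V] (R R' : V → V → ℝ) : ℝ :=
  (∑ i, ∑ j, |R i j - R' i j|) / ((Fintype.card V : ℝ) ^ 2)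

/-- `G` contains a (subgraph) copy of `F`. -/
def HasCopy {α V : Type*} (F : SimpleGraph α) (G : SimpleGraph V) : Prop :=
  ∃ f : α ↪ V, ∀ u w, F.Adj u w → G.Adj (f u) (f w)

/-!
Sending each vertex to its class turns a copy of `F` in `G` into a homomorphism `F → S` of
positive weight, which `t(F, S) = 0` forbids. Between classes with `S(i,j) ≠ 0` the graph `G`
keeps every edge of `Γ`, hence at least `S(i,j)·|V_i|·|V_j|` ordered pairs; with
`|V_i| ≥ n/k - 1` this gives `e(G) ≥ e(S)·((n/k)² - 2n/k)`, and the loss `2e(S)·n/k` is at most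
`k·n ≤ εn²` because `S ≤ 1` pointwise.
-/

namespace SimpleGraph

lemma adj_out_of_mem_edgeFinset {α : Type*} [Fintype α] {F : SimpleGraph α} {e : Sym2 α}
    (he : e ∈ F.edgeFinset) : F.Adj (Quot.out e).1 (Quot.out e).2 := by
  rw [mem_edgeFinset, ← Quot.out_eq e] at he
  exact he

end SimpleGraph

section HomDensity

variable {α W : Type*} [Fintype α] {F : SimpleGraph α} {R : W → W → ℝ}

lemma homW_pos {φ : α → W} (hφ : ∀ u w, F.Adj u w → 0 < R (φ u) (φ w)) :
    0 < homW F R φ :=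
  prod_pos fun _ he => hφ _ _ (SimpleGraph.adj_out_of_mem_edgeFinset he)

lemma tW_pos_of_homW_pos [Fintype W] (hR : ∀ a b, 0 ≤ R a b) {φ : α → W}
    (hφ : 0 < homW F R φ) : 0 < tW F R := by
  have hsum : 0 < ∑ ψ : α → W, homW F R ψ :=
    hφ.trans_le <| single_le_sum (f := homW F R)
      (fun _ _ => prod_nonneg fun _ _ => hR _ _) (mem_univ φ)
  have hcard : (0 : ℝ) < (Fintype.card W : ℝ) ^ Fintype.card α := by
    have := Fintype.card_pos_iff.mpr ⟨φ⟩
    rw [Fintype.card_fun] at this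
    exact_mod_cast this
  exact div_pos hsum hcard

lemma not_hasCopy_of_tW_eq_zero {V : Type*} [Fintype W] {G : SimpleGraph V} (c : V → W)
    (hR : ∀ a b, 0 ≤ R a b) (hGc : ∀ u v, G.Adj u v → R (c u) (c v) ≠ 0)
    (hF : tW F R = 0) : ¬ HasCopy F G := by
  rintro ⟨f, hf⟩
  have hpos : 0 < homW F R (c ∘ f) :=
    homW_pos fun u w huw => (hR _ _).lt_of_ne' (hGc _ _ (hf u w huw))
  exact (tW_pos_of_homW_pos hR hpos).ne' hF

end HomDensity

section Partition

variable {ι V : Type*} {P : ι → Finset V}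

lemma eq_of_mem_of_mem_of_disjoint (hdisj : ∀ i j, i ≠ j → Disjoint (P i) (P j)) {v : V}
    {i j : ι} (hi : v ∈ P i) (hj : v ∈ P j) : i = j := by
  by_contra h
  exact disjoint_left.mp (hdisj i j h) hi hj

variable [Fintype ι] [Fintype V] [DecidableEq V]

lemma exists_mem_of_biUnion_eq_univ (hcover : univ.biUnion P = univ) (v : V) :
    ∃ i, v ∈ P i := by
  simpa using hcover.ge (mem_univ v)

lemma sum_card_eq_card_of_disjoint_of_biUnion_eq_univ
    (hdisj : ∀ i j, i ≠ j → Disjoint (P i) (P j)) (hcover : univ.biUnion P = univ) :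
    ∑ i, #(P i) = Fintype.card V := by
  rw [← card_univ, ← hcover, card_biUnion fun i _ j _ h => hdisj i j h]

lemma two_mul_card_edgeFinset_eq_sum_card_interedges (G : SimpleGraph V)
    (hdisj : ∀ i j, i ≠ j → Disjoint (P i) (P j)) (hcover : univ.biUnion P = univ) :
    2 * #G.edgeFinset = ∑ i, ∑ j, #(G.interedges (P i) (P j)) := by
  have hpairs : ((univ ×ˢ univ : Finset (ι × ι)) : Set (ι × ι)).PairwiseDisjoint
      fun ij => G.interedges (P ij.1) (P ij.2) := by
    rintro ⟨i, j⟩ - ⟨i', j'⟩ - h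
    simp only [Function.onFun, disjoint_left, SimpleGraph.mem_interedges_iff]
    rintro ⟨u, v⟩ ⟨hu, hv, -⟩ ⟨hu', hv', -⟩
    exact h (Prod.ext (eq_of_mem_of_mem_of_disjoint hdisj hu hu')
      (eq_of_mem_of_mem_of_disjoint hdisj hv hv'))
  have huniv : G.interedges univ univ = univ.filter fun p : V × V => G.Adj p.1 p.2 := by
    rw [SimpleGraph.interedges_def, univ_product_univ]
  rw [G.two_mul_card_edgeFinset, ← huniv, ← hcover, SimpleGraph.interedges_biUnion,
    card_biUnion hpairs, sum_product]

lemma div_card_sub_one_le {a : ι → ℕ} {n : ℕ} (hsum : ∑ j, a j = n)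
    (hsize : ∀ i j, a i ≤ a j + 1) (i : ι) :
    (n : ℝ) / Fintype.card ι - 1 ≤ a i := by
  have hk : (0 : ℝ) < Fintype.card ι := by exact_mod_cast Fintype.card_pos_iff.mpr ⟨i⟩
  have hn : (n : ℝ) ≤ Fintype.card ι * (a i + 1) := by
    have := sum_le_sum fun j (_ : j ∈ univ) => hsize j i
    rw [hsum, sum_const, card_univ, smul_eq_mul] at this
    exact_mod_cast this
  rw [div_sub_one hk.ne', div_le_iff₀ hk]
  linarith

end Partition

lemma sq_sub_two_mul_le_mul {q a b : ℝ} (hq : 0 ≤ q) (ha : q - 1 ≤ a) (hb : q - 1 ≤ b)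
    (ha0 : 0 ≤ a) (hb0 : 0 ≤ b) : q ^ 2 - 2 * q ≤ a * b := by
  rcases le_or_gt 1 q with h1 | h1
  · nlinarith [mul_le_mul ha hb (by linarith) ha0]
  · nlinarith [mul_nonneg ha0 hb0]

lemma clusterW_le_one {V : Type*} {k : ℕ} (Γ : SimpleGraph V) (P : Fin k → Finset V)
    (i j : Fin k) : clusterW Γ P i j ≤ 1 := by
  refine div_le_one_of_le₀ ?_ (by positivity)
  exact_mod_cast (card_filter_le _ _).trans (card_product (P i) (P j)).le

section WeightedCount

variable {ι V : Type*} {P : ι → Finset V} {Γ G : SimpleGraph V} {S : ι → ι → ℝ}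

lemma mul_card_mul_card_le_card_interedges (s t : Finset V) {w : ℝ}
    (hw : w ≤ #(Γ.interedges s t) / ((#s : ℝ) * #t)) :
    w * (#s * #t) ≤ #(Γ.interedges s t) := by
  by_cases h : (#s : ℝ) * #t = 0
  · simp [h]
  · rwa [le_div_iff₀ (lt_of_le_of_ne (by positivity) (Ne.symm h))] at hw

lemma interedges_eq_of_adj_iff (hdisj : ∀ i j, i ≠ j → Disjoint (P i) (P j))
    (hG : ∀ u v, G.Adj u v ↔ (Γ.Adj u v ∧ ∀ i j, u ∈ P i → v ∈ P j → S i j ≠ 0))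
    {i j : ι} (hS : S i j ≠ 0) : G.interedges (P i) (P j) = Γ.interedges (P i) (P j) := by
  ext ⟨u, v⟩
  simp only [SimpleGraph.mk_mem_interedges_iff, hG, and_congr_right_iff, and_iff_left_iff_imp]
  rintro hu hv - i' j' hu' hv'
  rwa [← eq_of_mem_of_mem_of_disjoint hdisj hu hu', ← eq_of_mem_of_mem_of_disjoint hdisj hv hv']

variable [Fintype ι] [Fintype V] [DecidableEq V]

lemma mul_sum_le_two_mul_card_edgeFinset (hdisj : ∀ i j, i ≠ j → Disjoint (P i) (P j))
    (hcover : univ.biUnion P = univ) (hS0 : ∀ i j, 0 ≤ S i j)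
    (hSle : ∀ i j, S i j ≤ #(Γ.interedges (P i) (P j)) / ((#(P i) : ℝ) * #(P j)))
    (hG : ∀ u v, G.Adj u v ↔ (Γ.Adj u v ∧ ∀ i j, u ∈ P i → v ∈ P j → S i j ≠ 0))
    {B : ℝ} (hB : ∀ i j, B ≤ #(P i) * #(P j)) :
    B * ∑ i, ∑ j, S i j ≤ 2 * #G.edgeFinset := by
  have hpair : ∀ i j, S i j * (#(P i) * #(P j)) ≤ #(G.interedges (P i) (P j)) := by
    intro i j
    by_cases hS : S i j = 0
    · simp [hS]
    · rw [interedges_eq_of_adj_iff hdisj hG hS]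
      exact mul_card_mul_card_le_card_interedges _ _ (hSle i j)
  have hcount : (2 * #G.edgeFinset : ℝ) = ∑ i, ∑ j, (#(G.interedges (P i) (P j)) : ℝ) := by
    exact_mod_cast two_mul_card_edgeFinset_eq_sum_card_interedges G hdisj hcover
  rw [hcount, mul_sum]
  refine sum_le_sum fun i _ => ?_
  rw [mul_sum]
  exact sum_le_sum fun j _ => by nlinarith [hB i j, hS0 i j, hpair i j]

end WeightedCount

theorem stmt11_general {V : Type*} [Fintype V] [DecidableEq V] (Γ : SimpleGraph V)
    (n : ℕ) (hn : n = Fintype.card V) (ε : ℝ)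
    {ι : Type*} (nF : ι → ℕ) (F : ∀ i, SimpleGraph (Fin (nF i)))
    {k : ℕ} (hkn : (k : ℝ) ≤ ε * n)
    (P : Fin k → Finset V)
    (hdisj : ∀ i j, i ≠ j → Disjoint (P i) (P j))
    (hcover : Finset.univ.biUnion P = Finset.univ)
    (hsize : ∀ i j, (P i).card ≤ (P j).card + 1)
    (S : Fin k → Fin k → ℝ)
    (hS0 : ∀ i j, 0 ≤ S i j)
    (hSle : ∀ i j, S i j ≤ clusterW Γ P i j)
    (hSfree : ∀ i, tW (F i) S = 0)
    (G : SimpleGraph V)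
    (hG : ∀ u v, G.Adj u v ↔ (Γ.Adj u v ∧ ∀ i j, u ∈ P i → v ∈ P j → S i j ≠ 0)) :
    (∀ i, ¬ HasCopy (F i) G) ∧
    ((G.edgeFinset.card : ℝ) ≥ (eW S / (k : ℝ) ^ 2 - ε) * (n : ℝ) ^ 2) := by
  choose c hc using exists_mem_of_biUnion_eq_univ hcover
  refine ⟨fun i => not_hasCopy_of_tW_eq_zero c hS0
    (fun u v huv => ((hG u v).1 huv).2 _ _ (hc u) (hc v)) (hSfree i), ?_⟩
  set q : ℝ := n / k with hq
  have hsum : ∑ j, #(P j) = n :=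
    hn ▸ sum_card_eq_card_of_disjoint_of_biUnion_eq_univ hdisj hcover
  have hclass : ∀ i, q - 1 ≤ #(P i) := by
    simpa using div_card_sub_one_le hsum hsize
  have hcount := mul_sum_le_two_mul_card_edgeFinset hdisj hcover hS0 hSle hG
    fun i j => sq_sub_two_mul_le_mul (by positivity) (hclass i) (hclass j)
      (by positivity) (by positivity)
  have hSk : ∑ i, ∑ j, S i j ≤ k ^ 2 := calc
    ∑ i, ∑ j, S i j ≤ ∑ _i : Fin k, ∑ _j : Fin k, (1 : ℝ) :=
      sum_le_sum fun i _ => sum_le_sum fun j _ => (hSle i j).trans (clusterW_le_one Γ P i j)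
    _ = k ^ 2 := by simp [sq]
  have hkq : (k : ℝ) ^ 2 * q = k * n := calc
    (k : ℝ) ^ 2 * q = k * k / k * n := by ring
    -- `k * k / k = k` holds also for `k = 0`
    _ = k * n := by rw [mul_self_div_self]
  have heW : ∑ i, ∑ j, S i j = 2 * eW S := by rw [eW]; ring
  have hq2 : eW S / k ^ 2 * n ^ 2 = eW S * q ^ 2 := by rw [hq, div_pow]; ring
  have hloss : 2 * eW S * q ≤ k ^ 2 * q :=
    mul_le_mul_of_nonneg_right (by linarith) (by positivity)
  have hkn' : (k : ℝ) * n ≤ ε * n * n := mul_le_mul_of_nonneg_right hkn (by positivity)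
  rw [heW] at hcount
  linarith

/-- Deleting from `Γ` the edges between classes on which an optimal `𝓕`-free weighted
subgraph `S` of the cluster graph vanishes yields an `𝓕`-free spanning subgraph `G` of `Γ`
with `e(G) ≥ (ex(R,𝓕) - ε)·n²`, provided `k ≤ ε·n`. -/
theorem stmt11 {V : Type*} [Fintype V] [DecidableEq V] (Γ : SimpleGraph V)
    (n : ℕ) (hn : n = Fintype.card V) (ε : ℝ) (hε : 0 < ε)
    {ι : Type*} (nF : ι → ℕ) (F : ∀ i, SimpleGraph (Fin (nF i)))
    {k : ℕ} (hk : 0 < k) (hkn : (k : ℝ) ≤ ε * n)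
    (P : Fin k → Finset V)
    (hdisj : ∀ i j, i ≠ j → Disjoint (P i) (P j))
    (hcover : Finset.univ.biUnion P = Finset.univ)
    (hsize : ∀ i j, (P i).card ≤ (P j).card + 1)
    (S : Fin k → Fin k → ℝ)
    (hSsym : ∀ i j, S i j = S j i) (hS0 : ∀ i j, 0 ≤ S i j)
    (hSle : ∀ i j, S i j ≤ clusterW Γ P i j)
    (hSfree : ∀ i, tW (F i) S = 0)
    (hSmax : ∀ S' : Fin k → Fin k → ℝ, (∀ i j, S' i j = S' j i) → (∀ i j, 0 ≤ S' i j) →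
      (∀ i j, S' i j ≤ clusterW Γ P i j) → (∀ i, tW (F i) S' = 0) → eW S' ≤ eW S)
    (G : SimpleGraph V)
    (hG : ∀ u v, G.Adj u v ↔ (Γ.Adj u v ∧ ∀ i j, u ∈ P i → v ∈ P j → S i j ≠ 0)) :
    (∀ i, ¬ HasCopy (F i) G) ∧
    ((G.edgeFinset.card : ℝ) ≥ (eW S / (k : ℝ) ^ 2 - ε) * (n : ℝ) ^ 2) :=
  stmt11_general Γ n hn ε nF F hkn P hdisj hcover hsize S hS0 hSle hSfree G hG
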